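/- arXiv:2510.26515 — 4 statements merged into one kernel-verified Lean document; each statement's English description precedes it below -/
import Mathlib

section
/- Let F = F_{a,v} be a Misiurewicz cubic map with data (ℓ, m, a_0), assume A_0 := (F^{∘ℓ})′(2a) ≠ 0, set λ_0 := (F^{∘m})′(a_0), ρ_k := 1/(A_0 λ_0^k), and let φ be the non-constant entire locally uniform limit of φ_k(w) := F^{∘(ℓ+km)}(2a + ρ_k w). Set 𝒦 := φ^{-1}(K_F). Then there exists r_0 > 0 such that for every r ≥ r_0, the Hausdorff distance between [{(z − 2a)/ρ_k : z ∈ K_F}]_r and [𝒦]_r tends to 0 as k → ∞. -/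
/-!
Since `K_F` is completely invariant, the rescaling `z ↦ (z - 2a) / ρ_k` carries `K_F` onto
`ψ_k⁻¹(K_F)`, where `ψ_k w = F^{l+km}(2a + ρ_k w)` are the maps converging to `φ`. It remains to see
that windows of preimages `ψ_k⁻¹(K)` of a closed set converge to the window of `φ⁻¹(K)`, for every
radius `r ≥ 0`. One inclusion is compactness plus uniform convergence on the disc. For the other,
Hurwitz's theorem (through the open mapping estimate `DiffContOnCl.ball_subset_image_closedBall`)
gives, near each `w ∈ φ⁻¹(K)`, a point where `ψ_k` takes the value `φ w ∈ K`; if that point lies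
just outside the disc, radial projection onto the boundary circle keeps it close.
-/

open Complex Metric Filter Function

/-- Milnor normal form cubic polynomial `F_{a,v}(z) = z^3 - 3a^2 z + (2a^3 + v)`. -/
noncomputable def Fav (a v : ℂ) : ℂ → ℂ := fun z => z ^ 3 - 3 * a ^ 2 * z + (2 * a ^ 3 + v)

/-- Filled Julia set of an entire map: points with bounded forward orbit. -/
def filledJulia (F : ℂ → ℂ) : Set ℂ :=
  {z : ℂ | Bornology.IsBounded (Set.range fun n : ℕ => F^[n] z)}

/-- The window `[A]_r = (A ∩ closedBall 0 r) ∪ sphere 0 r`. -/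
def window (A : Set ℂ) (r : ℝ) : Set ℂ :=
  (A ∩ Metric.closedBall (0 : ℂ) r) ∪ Metric.sphere (0 : ℂ) r

/-- `F_{a,v}` is a Misiurewicz map with data `(l, m, a0)`. -/
structure IsMisiurewicz (a v : ℂ) (l m : ℕ) (a0 : ℂ) : Prop where
  marked_periodic : ∃ p : ℕ, 1 ≤ p ∧ (Fav a v)^[p] a = a
  free_not_periodic : ∀ n : ℕ, 1 ≤ n → (Fav a v)^[n] (-a) ≠ -a
  hl : 1 ≤ l
  hm : 1 ≤ m
  ha0 : (Fav a v)^[l] (2 * a) = a0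
  hper : (Fav a v)^[m] a0 = a0
  hrep : 1 < ‖deriv ((Fav a v)^[m]) a0‖

open Topology

theorem Set.range_eq_insert_range_succ {α : Type*} (f : ℕ → α) :
    Set.range f = insert (f 0) (Set.range fun n => f (n + 1)) := by
  ext y
  constructor
  · rintro ⟨_ | n, rfl⟩
    exacts [Set.mem_insert _ _, Set.mem_insert_of_mem _ ⟨n, rfl⟩]
  · rintro (rfl | ⟨n, rfl⟩)
    exacts [⟨0, rfl⟩, ⟨n + 1, rfl⟩]

section FilledJulia

variable {F : ℂ → ℂ}

theorem mem_filledJulia_iff {z : ℂ} :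
    z ∈ filledJulia F ↔ Bornology.IsBounded (Set.range fun n : ℕ => F^[n] z) :=
  Iff.rfl

theorem apply_mem_filledJulia_iff {z : ℂ} : F z ∈ filledJulia F ↔ z ∈ filledJulia F := by
  have horbit := Set.range_eq_insert_range_succ fun n => F^[n] z
  simp only [iterate_succ_apply, iterate_zero_apply] at horbit
  rw [mem_filledJulia_iff, mem_filledJulia_iff, horbit, Bornology.isBounded_insert]

theorem iterate_mem_filledJulia_iff (n : ℕ) {z : ℂ} :
    F^[n] z ∈ filledJulia F ↔ z ∈ filledJulia F := by
  induction n with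
  | zero => rfl
  | succ n ih => rw [iterate_succ_apply', apply_mem_filledJulia_iff, ih]

variable {R : ℝ}

theorem two_pow_mul_norm_le_norm_iterate (hF : ∀ z, R < ‖z‖ → 2 * ‖z‖ ≤ ‖F z‖) {z : ℂ}
    (hz : R < ‖z‖) (n : ℕ) :
    2 ^ n * ‖z‖ ≤ ‖F^[n] z‖ := by
  induction n with
  | zero => simp
  | succ n ih =>
    have hescaped : R < ‖F^[n] z‖ := by
      nlinarith [one_le_pow₀ (M₀ := ℝ) one_le_two (n := n), norm_nonneg z]
    rw [iterate_succ_apply', pow_succ]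
    linarith [hF _ hescaped]

theorem notMem_filledJulia_of_lt_norm (hR : 0 ≤ R) (hF : ∀ z, R < ‖z‖ → 2 * ‖z‖ ≤ ‖F z‖)
    {z : ℂ} (hz : R < ‖z‖) : z ∉ filledJulia F := by
  intro hbdd
  obtain ⟨C, hC⟩ := (mem_filledJulia_iff.1 hbdd).exists_norm_le
  obtain ⟨n, hn⟩ := pow_unbounded_of_one_lt (C / ‖z‖) one_lt_two
  have hz0 : 0 < ‖z‖ := hR.trans_lt hz
  have := (two_pow_mul_norm_le_norm_iterate hF hz n).trans (hC _ ⟨n, rfl⟩)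
  rw [div_lt_iff₀ hz0] at hn
  linarith

theorem filledJulia_eq_iInter_preimage_closedBall (hR : 0 ≤ R)
    (hF : ∀ z, R < ‖z‖ → 2 * ‖z‖ ≤ ‖F z‖) :
    filledJulia F = ⋂ n : ℕ, F^[n] ⁻¹' closedBall 0 R := by
  ext z
  simp only [Set.mem_iInter, Set.mem_preimage, mem_closedBall_zero_iff]
  refine ⟨fun hz n => ?_, fun hz =>
    mem_filledJulia_iff.2 ((isBounded_closedBall (x := (0 : ℂ)) (r := R)).subset ?_)⟩
  · by_contra! hn
    exact notMem_filledJulia_of_lt_norm hR hF hn ((iterate_mem_filledJulia_iff n).2 hz)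
  · rintro _ ⟨n, rfl⟩
    exact mem_closedBall_zero_iff.2 (hz n)

theorem isClosed_filledJulia (hR : 0 ≤ R) (hF : ∀ z, R < ‖z‖ → 2 * ‖z‖ ≤ ‖F z‖)
    (hFc : Continuous F) : IsClosed (filledJulia F) := by
  rw [filledJulia_eq_iInter_preimage_closedBall hR hF]
  exact isClosed_iInter fun n => isClosed_closedBall.preimage (hFc.iterate n)

end FilledJulia

theorem differentiable_Fav (a v : ℂ) : Differentiable ℂ (Fav a v) := by
  unfold Fav
  fun_prop

theorem two_mul_norm_le_norm_Fav (a v : ℂ) {z : ℂ}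
    (hz : 3 * ‖a‖ ^ 2 + ‖2 * a ^ 3 + v‖ + 2 < ‖z‖) : 2 * ‖z‖ ≤ ‖Fav a v z‖ := by
  have hlower : ‖z‖ ^ 3 - (3 * ‖a‖ ^ 2 * ‖z‖ + ‖2 * a ^ 3 + v‖) ≤ ‖Fav a v z‖ :=
    calc ‖z‖ ^ 3 - (3 * ‖a‖ ^ 2 * ‖z‖ + ‖2 * a ^ 3 + v‖)
        ≤ ‖z ^ 3‖ - ‖3 * a ^ 2 * z - (2 * a ^ 3 + v)‖ := by
          gcongr
          · rw [norm_pow]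
          · refine (norm_sub_le _ _).trans_eq ?_
            simp [norm_pow]
      _ ≤ ‖Fav a v z‖ := by
          rw [show Fav a v z = z ^ 3 - (3 * a ^ 2 * z - (2 * a ^ 3 + v)) by unfold Fav; ring]
          exact norm_sub_norm_le _ _
  have h1 : 1 ≤ ‖z‖ := by nlinarith [norm_nonneg (2 * a ^ 3 + v)]
  nlinarith [mul_le_mul_of_nonneg_left h1 (norm_nonneg (2 * a ^ 3 + v)),
    mul_le_mul_of_nonneg_left h1 (norm_nonneg z),
    mul_lt_mul_of_pos_left hz (by positivity : 0 < ‖z‖)]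

theorem isClosed_filledJulia_Fav (a v : ℂ) : IsClosed (filledJulia (Fav a v)) :=
  isClosed_filledJulia (by positivity) (fun _ => two_mul_norm_le_norm_Fav a v)
    (differentiable_Fav a v).continuous

theorem Differentiable.eventually_ne_nhdsNE {f : ℂ → ℂ} (hf : Differentiable ℂ f)
    (hnc : ∃ w₁ w₂, f w₁ ≠ f w₂) (w : ℂ) : ∀ᶠ z in 𝓝[≠] w, f z ≠ f w := by
  have hfa : AnalyticOnNhd ℂ f Set.univ := analyticOnNhd_univ_iff_differentiable.2 hf
  refine ((hfa w trivial).eventually_eq_or_eventually_ne analyticAt_const).resolve_left ?_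
  intro hloc
  obtain ⟨w₁, w₂, hne⟩ := hnc
  have hconst := hfa.eqOn_of_preconnected_of_eventuallyEq analyticOnNhd_const
    isPreconnected_univ (Set.mem_univ w) hloc
  exact hne ((hconst trivial).trans (hconst trivial).symm)

theorem TendstoLocallyUniformly.eventually_mem_image_closedBall {ι : Type*} {p : Filter ι}
    {ψ : ι → ℂ → ℂ} {φ : ℂ → ℂ} (h : TendstoLocallyUniformly ψ φ p)
    (hψ : ∀ i, Differentiable ℂ (ψ i)) (hφ : Differentiable ℂ φ) (hφnc : ∃ w₁ w₂, φ w₁ ≠ φ w₂)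
    (w : ℂ) {ε : ℝ} (hε : 0 < ε) : ∀ᶠ i in p, φ w ∈ ψ i '' closedBall w ε := by
  obtain ⟨s, hs0, hsε, hsph⟩ : ∃ s, 0 < s ∧ s ≤ ε ∧ ∀ z ∈ sphere w s, φ z ≠ φ w := by
    obtain ⟨δ, hδ0, hδ⟩ := Metric.eventually_nhds_iff.1
      (eventually_nhdsWithin_iff.1 (hφ.eventually_ne_nhdsNE hφnc w))
    refine ⟨min (δ / 2) ε, by positivity, min_le_right _ _, fun z hz => hδ ?_ ?_⟩
    · rw [mem_sphere.1 hz]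
      exact (min_le_left _ _).trans_lt (half_lt_self hδ0)
    · rintro rfl
      simp only [mem_sphere, dist_self] at hz
      exact (lt_min (half_pos hδ0) hε).ne hz
  obtain ⟨δ, hδ0, hδ⟩ : ∃ δ, 0 < δ ∧ ∀ z ∈ sphere w s, δ ≤ dist (φ z) (φ w) :=
    (isCompact_sphere w s).exists_forall_le' (hφ.continuous.dist continuous_const).continuousOn
      fun z hz => dist_pos.2 (hsph z hz)
  have hunif := Metric.tendstoUniformlyOn_iff.1
    (tendstoLocallyUniformly_iff_forall_isCompact.1 h _ (isCompact_closedBall w s)) (δ / 8)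
    (by positivity)
  filter_upwards [hunif] with i hi
  have hw : dist (φ w) (ψ i w) < δ / 8 := hi w (mem_closedBall_self hs0.le)
  have hsph_i : ∀ z ∈ sphere w s, 3 * δ / 4 ≤ ‖ψ i z - ψ i w‖ := fun z hz => by
    rw [← dist_eq_norm]
    linarith [hδ z hz, hi z (sphere_subset_closedBall hz), dist_comm (φ w) (ψ i w),
      dist_triangle4 (φ z) (ψ i z) (ψ i w) (φ w)]
  have hψnc : ∃ᶠ z in 𝓝 w, ψ i z ≠ ψ i w := by
    obtain ⟨z, hz⟩ := (NormedSpace.sphere_nonempty (x := w)).2 hs0.le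
    have hne : ψ i z ≠ ψ i w := fun heq => by
      have := hsph_i z hz
      rw [heq, sub_self, norm_zero] at this
      linarith
    exact (((hψ i).eventually_ne_nhdsNE ⟨z, w, hne⟩ w).frequently).filter_mono
      nhdsWithin_le_nhds
  refine Set.image_mono (closedBall_subset_closedBall hsε)
    ((hψ i).diffContOnCl.ball_subset_image_closedBall hs0 hsph_i hψnc ?_)
  rw [mem_ball]
  linarith

section Window

variable {r : ℝ}

/-- Radial projection onto `sphere 0 r` moves a point of norm at most `r + δ` by at most `δ`. -/
theorem exists_mem_window_dist_le {A : Set ℂ} (hr : 0 ≤ r) {x : ℂ} (hxA : x ∈ A) {δ : ℝ}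
    (hxr : ‖x‖ ≤ r + δ) (hδ : 0 ≤ δ) : ∃ x' ∈ window A r, dist x x' ≤ δ := by
  rcases le_or_gt ‖x‖ r with hxr' | hxr'
  · exact ⟨x, Or.inl ⟨hxA, mem_closedBall_zero_iff.2 hxr'⟩, by simpa using hδ⟩
  have hx0 : 0 < ‖x‖ := hr.trans_lt hxr'
  refine ⟨(r / ‖x‖) • x, Or.inr ?_, ?_⟩
  · rw [mem_sphere_zero_iff_norm, norm_smul, Real.norm_of_nonneg (by positivity),
      div_mul_cancel₀ _ hx0.ne']
  · have hcoef : 0 ≤ 1 - r / ‖x‖ := sub_nonneg.2 ((div_le_one hx0).2 hxr'.le)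
    rw [dist_eq_norm, show x - (r / ‖x‖) • x = (1 - r / ‖x‖) • x by rw [sub_smul, one_smul],
      norm_smul, Real.norm_of_nonneg hcoef, sub_mul, one_mul,
      div_mul_cancel₀ _ hx0.ne']
    linarith

variable {ι : Type*} {p : Filter ι} {ψ : ι → ℂ → ℂ} {φ : ℂ → ℂ} {K : Set ℂ} {ε : ℝ}

/-- Points of the disc far from `window (φ ⁻¹' K) r` form a compact set which `φ` maps off `K`,
hence at positive distance from `K`; uniform convergence then keeps `ψ i` off `K` there. -/
theorem TendstoUniformlyOn.eventually_window_preimage_subset_thickening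
    (h : TendstoUniformlyOn ψ φ p (closedBall 0 r)) (hφ : Continuous φ) (hK : IsClosed K)
    (hε : 0 < ε) :
    ∀ᶠ i in p, window (ψ i ⁻¹' K) r ⊆ thickening ε (window (φ ⁻¹' K) r) := by
  set W := closedBall 0 r ∩ (thickening ε (window (φ ⁻¹' K) r))ᶜ
  have hW : IsCompact W := (isCompact_closedBall 0 r).inter_right isOpen_thickening.isClosed_compl
  have hWK : φ '' W ⊆ Kᶜ := by
    rintro _ ⟨z, ⟨hzr, hzε⟩, rfl⟩ hzK
    exact hzε (self_subset_thickening hε _ (Or.inl ⟨hzK, hzr⟩))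
  obtain ⟨δ, hδ0, hδ⟩ := (hW.image hφ).exists_thickening_subset_open hK.isOpen_compl hWK
  filter_upwards [Metric.tendstoUniformlyOn_iff.1 h δ hδ0] with i hi x hx
  by_contra hxε
  rcases hx with ⟨hxK, hxr⟩ | hxs
  · refine hδ (mem_thickening_iff.2 ⟨φ x, ⟨x, ⟨hxr, hxε⟩, rfl⟩, ?_⟩) hxK
    rw [dist_comm]
    exact hi x hxr
  · exact hxε (self_subset_thickening hε _ (Or.inr hxs))

theorem TendstoLocallyUniformly.eventually_window_preimage_limit_subset_thickening
    (h : TendstoLocallyUniformly ψ φ p) (hψ : ∀ i, Differentiable ℂ (ψ i))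
    (hφ : Differentiable ℂ φ) (hφnc : ∃ w₁ w₂, φ w₁ ≠ φ w₂) (hK : IsClosed K) (hr : 0 ≤ r)
    (hε : 0 < ε) :
    ∀ᶠ i in p, window (φ ⁻¹' K) r ⊆ thickening ε (window (ψ i ⁻¹' K) r) := by
  have hC : IsCompact (φ ⁻¹' K ∩ closedBall 0 r) :=
    (isCompact_closedBall 0 r).inter_left (hK.preimage hφ.continuous)
  obtain ⟨t, htC, htfin, hcov⟩ := finite_cover_balls_of_compact hC (half_pos hε)
  have hε4 : 0 < ε / 4 := by positivity
  filter_upwards [htfin.eventually_all.2 fun w _ =>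
    h.eventually_mem_image_closedBall hψ hφ hφnc w hε4] with i hi y hy
  rcases hy with hyC | hys
  · obtain ⟨w, hwt, hyw⟩ := Set.mem_iUnion₂.1 (hcov hyC)
    obtain ⟨hwK, hwr⟩ := htC hwt
    obtain ⟨x, hxw, hψx⟩ := hi w hwt
    have hxr : ‖x‖ ≤ r + ε / 4 := by
      linarith [norm_le_norm_add_norm_sub' x w, mem_closedBall_zero_iff.1 hwr,
        (dist_eq_norm x w).symm.trans_le (mem_closedBall.1 hxw)]
    obtain ⟨x', hx', hxx'⟩ := exists_mem_window_dist_le hr (A := ψ i ⁻¹' K)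
      (by rwa [Set.mem_preimage, hψx]) hxr hε4.le
    refine mem_thickening_iff.2 ⟨x', hx', ?_⟩
    linarith [dist_triangle4 y w x x', dist_comm w x, mem_ball.1 hyw, mem_closedBall.1 hxw]
  · exact self_subset_thickening hε _ (Or.inr hys)

theorem tendsto_hausdorffDist_window_preimage (h : TendstoLocallyUniformly ψ φ p)
    (hψ : ∀ i, Differentiable ℂ (ψ i)) (hφ : Differentiable ℂ φ) (hφnc : ∃ w₁ w₂, φ w₁ ≠ φ w₂)
    (hK : IsClosed K) (hr : 0 ≤ r) :
    Tendsto (fun i => hausdorffDist (window (ψ i ⁻¹' K) r) (window (φ ⁻¹' K) r)) p (𝓝 0) := by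
  rw [Metric.tendsto_nhds]
  intro ε hε
  have hunif := tendstoLocallyUniformly_iff_forall_isCompact.1 h _ (isCompact_closedBall 0 r)
  filter_upwards [hunif.eventually_window_preimage_subset_thickening hφ.continuous hK (half_pos hε),
    h.eventually_window_preimage_limit_subset_thickening hψ hφ hφnc hK hr (half_pos hε)]
    with i h₁ h₂
  rw [Real.dist_0_eq_abs, abs_of_nonneg hausdorffDist_nonneg]
  refine (hausdorffDist_le_of_mem_dist (half_pos hε).le (fun x hx => ?_) fun y hy => ?_).trans_lt
    (half_lt_self hε)
  · obtain ⟨y, hy, hxy⟩ := mem_thickening_iff.1 (h₁ hx)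
    exact ⟨y, hy, hxy.le⟩
  · obtain ⟨x, hx, hyx⟩ := mem_thickening_iff.1 (h₂ hy)
    exact ⟨x, hx, hyx.le⟩

end Window

theorem image_div_sub_eq_preimage {c ρ : ℂ} (hρ : ρ ≠ 0) (S : Set ℂ) :
    (fun z => (z - c) / ρ) '' S = (fun w => c + ρ * w) ⁻¹' S :=
  congrFun (Set.image_eq_preimage_of_inverse (fun z => by field_simp; ring)
    fun w => by field_simp; ring) S

theorem stmt3 (a v : ℂ) (l m : ℕ) (a0 : ℂ) (hmis : IsMisiurewicz a v l m a0)
    (hA0 : deriv ((Fav a v)^[l]) (2 * a) ≠ 0)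
    (ρ : ℕ → ℂ)
    (hρ : ∀ k, ρ k = 1 / (deriv ((Fav a v)^[l]) (2 * a) * (deriv ((Fav a v)^[m]) a0) ^ k))
    (φ : ℂ → ℂ) (hφd : Differentiable ℂ φ) (hφnc : ∃ w₁ w₂ : ℂ, φ w₁ ≠ φ w₂)
    (hφ : TendstoLocallyUniformly
      (fun (k : ℕ) (w : ℂ) => (Fav a v)^[l + k * m] (2 * a + ρ k * w)) φ atTop) :
    ∃ r0 : ℝ, 0 < r0 ∧ ∀ r : ℝ, r0 ≤ r →
      Tendsto (fun k : ℕ => Metric.hausdorffDist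
        (window ((fun z => (z - 2 * a) / ρ k) '' filledJulia (Fav a v)) r)
        (window (φ ⁻¹' filledJulia (Fav a v)) r)) atTop (nhds 0) := by
  have hderiv : deriv ((Fav a v)^[m]) a0 ≠ 0 := norm_pos_iff.1 (one_pos.trans hmis.hrep)
  have hρ0 : ∀ k, ρ k ≠ 0 := fun k => by
    rw [hρ k]
    exact one_div_ne_zero (mul_ne_zero hA0 (pow_ne_zero _ hderiv))
  have himg : ∀ k, (fun z => (z - 2 * a) / ρ k) '' filledJulia (Fav a v) =
      (fun w => (Fav a v)^[l + k * m] (2 * a + ρ k * w)) ⁻¹' filledJulia (Fav a v) := fun k => by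
    rw [image_div_sub_eq_preimage (hρ0 k)]
    ext w
    exact (iterate_mem_filledJulia_iff _).symm
  refine ⟨1, one_pos, fun r hr => ?_⟩
  simp only [himg]
  exact tendsto_hausdorffDist_window_preimage hφ
    (fun k => ((differentiable_Fav a v).iterate _).comp (by fun_prop)) hφd hφnc
    (isClosed_filledJulia_Fav a v) (zero_le_one.trans hr)
end

section
/- Let g : ℂ → ℂ be entire with g(0) = 0 and g′(0) = λ, where |λ| > 1. Then the functions ψ_n(w) := g^{∘n}(w/λ^n) converge locally uniformly on ℂ, as n → ∞, to an entire function ψ : ℂ → ℂ satisfying g(ψ(w)) = ψ(λw) for all w ∈ ℂ, ψ(0) = 0, and ψ′(0) = 1 (in particular ψ is non-constant). -/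
open Complex Metric Filter Function

/-!
Write `μ = ‖λ‖` and `ψₙ w = g^[n] (w / λⁿ)`. Near `0` we have `‖g z - λ z‖ ≤ C ‖z‖²`, and on the
disc of radius `2δ` the map `g` is Lipschitz with constant `ν = μ + 2Cδ < μ²` once `δ` is small.
When `4Cδ ≤ μ² - μ`, the bound `‖z‖ ≤ δ t (1 + t)` at scale `t` is carried by `g` to the same
bound at scale `μ t`; hence for `‖w‖ ≤ δ` the first `m` iterates of `w / λᵐ` stay in that disc.
Writing `u = w / λⁿ⁺¹`, we get `ψₙ₊₁ w - ψₙ w = gⁿ (g u) - gⁿ (λ u)`, of norm at most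
`νⁿ C ‖u‖² ≤ C δ² (ν / μ²)ⁿ`, so `ψₙ` converges uniformly on the disc of radius `δ`.
The relation `ψₙ₊₁ w = g (ψₙ (w / λ))` carries locally uniform convergence from a disc to the
disc `μ` times larger, and Weierstrass' theorem makes the limit holomorphic with
`ψ' 0 = lim ψₙ' 0 = 1`.
-/

open Topology Set

section UniformConvergence

variable {α β : Type*} [TopologicalSpace α] [UniformSpace β]

theorem TendstoLocallyUniformlyOn.of_add_nat {F : ℕ → α → β} {f : α → β} {s : Set α} (k : ℕ)
    (h : TendstoLocallyUniformlyOn (fun n => F (n + k)) f atTop s) :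
    TendstoLocallyUniformlyOn F f atTop s := by
  intro u hu x hx
  obtain ⟨t, ht, hF⟩ := h u hu x hx
  exact ⟨t, ht, by rw [← map_add_atTop_eq_nat k]; exact hF⟩

theorem Continuous.comp_tendstoLocallyUniformlyOn {γ ι : Type*} [UniformSpace γ] {p : Filter ι}
    {F : ι → α → β} {f : α → β} {s : Set α} {g : β → γ} (hg : Continuous g)
    (hF : TendstoLocallyUniformlyOn F f p s) (hf : ContinuousOn f s) :
    TendstoLocallyUniformlyOn (g ∘ F ·) (g ∘ f) p s := by
  rw [tendstoLocallyUniformlyOn_iff_forall_tendsto] at hF ⊢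
  intro x hx
  have hlim : Tendsto (fun y : ι × α => f y.2) (p ×ˢ 𝓝[s] x) (𝓝 (f x)) :=
    (hf x hx).tendsto.comp tendsto_snd
  have hFlim := hlim.congr_uniformity (hF x hx)
  exact (((hg.tendsto _).comp hlim).prodMk_nhds ((hg.tendsto _).comp hFlim)).mono_right
    (nhds_le_uniformity _)

end UniformConvergence

theorem tendstoUniformlyOn_limUnder_of_dist_le_geometric {α β : Type*} [MetricSpace β]
    [CompleteSpace β] [Nonempty β] {F : ℕ → α → β} {s : Set α} {B r : ℝ} (hr₀ : 0 ≤ r)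
    (hr : r < 1) (hF : ∀ x ∈ s, ∀ n, dist (F n x) (F (n + 1) x) ≤ B * r ^ n) :
    TendstoUniformlyOn F (fun x => limUnder atTop (F · x)) atTop s := by
  rw [Metric.tendstoUniformlyOn_iff]
  intro ε hε
  have hbound : Tendsto (fun n => B * r ^ n / (1 - r)) atTop (𝓝 0) := by
    simpa using ((tendsto_pow_atTop_nhds_zero_of_lt_one hr₀ hr).const_mul B).div_const (1 - r)
  filter_upwards [hbound.eventually (gt_mem_nhds hε)] with n hn x hx
  have hlim := tendsto_nhds_limUnder (cauchySeq_tendsto_of_complete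
    (cauchySeq_of_le_geometric r B hr (hF x hx)))
  rw [dist_comm]
  exact (dist_le_of_le_geometric_of_tendsto r B hr (hF x hx) hlim n).trans_lt hn

theorem dist_iterate_le_pow_mul {X : Type*} [PseudoMetricSpace X] {f : X → X} {s : Set X}
    {ν : ℝ} (hν : 0 ≤ ν) (hf : ∀ x ∈ s, ∀ y ∈ s, dist (f x) (f y) ≤ ν * dist x y) {x y : X} :
    ∀ {n : ℕ}, (∀ k < n, f^[k] x ∈ s) → (∀ k < n, f^[k] y ∈ s) →
      dist (f^[n] x) (f^[n] y) ≤ ν ^ n * dist x y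
  | 0, _, _ => by simp
  | n + 1, hx, hy => by
    rw [iterate_succ_apply', iterate_succ_apply', pow_succ', mul_assoc]
    refine (hf _ (hx n n.lt_succ_self) _ (hy n n.lt_succ_self)).trans ?_
    exact mul_le_mul_of_nonneg_left (dist_iterate_le_pow_mul hν hf
      (fun k hk => hx k (hk.trans n.lt_succ_self)) (fun k hk => hy k (hk.trans n.lt_succ_self))) hν

section QuadraticGrowth

variable {E : Type*} [SeminormedAddCommGroup E] {g : E → E} {μ C δ : ℝ}

theorem norm_apply_le_of_norm_le_mul_add_sq (hμ : 1 ≤ μ) (hC : 0 ≤ C) (hδ : 0 ≤ δ)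
    (hCδ : 4 * C * δ ≤ μ ^ 2 - μ) (hg : ∀ z, ‖z‖ ≤ 2 * δ → ‖g z‖ ≤ μ * ‖z‖ + C * ‖z‖ ^ 2)
    {t : ℝ} (ht : 0 ≤ t) (hμt : μ * t ≤ 1) {z : E} (hz : ‖z‖ ≤ δ * t * (1 + t)) :
    ‖g z‖ ≤ δ * (μ * t) * (1 + μ * t) := by
  have ht1 : t ≤ 1 := le_trans (le_mul_of_one_le_left ht hμ) hμt
  have hz2 : ‖z‖ ≤ 2 * δ * t := by nlinarith [mul_le_mul_of_nonneg_left ht1 (mul_nonneg hδ ht)]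
  have hgz := hg z (hz2.trans (by nlinarith))
  have hsq : C * ‖z‖ ^ 2 ≤ C * (2 * δ * t) ^ 2 := by gcongr
  nlinarith [mul_le_mul_of_nonneg_right hCδ (by positivity : 0 ≤ δ * t ^ 2)]

theorem norm_iterate_le_of_norm_le_mul_add_sq (hμ : 1 ≤ μ) (hC : 0 ≤ C) (hδ : 0 ≤ δ)
    (hCδ : 4 * C * δ ≤ μ ^ 2 - μ) (hg : ∀ z, ‖z‖ ≤ 2 * δ → ‖g z‖ ≤ μ * ‖z‖ + C * ‖z‖ ^ 2) :
    ∀ (k : ℕ) {t : ℝ}, 0 ≤ t → μ ^ k * t ≤ 1 → ∀ {z : E}, ‖z‖ ≤ δ * t * (1 + t) →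
      ‖g^[k] z‖ ≤ δ * (μ ^ k * t) * (1 + μ ^ k * t)
  | 0, _, _, _, _, hz => by simpa using hz
  | k + 1, t, ht, hkt, z, hz => by
    have hμt : μ * t ≤ 1 :=
      le_trans (mul_le_mul_of_nonneg_right (le_self_pow₀ hμ k.succ_ne_zero) ht) hkt
    rw [iterate_succ_apply, pow_succ, mul_assoc (μ ^ k) μ t]
    exact norm_iterate_le_of_norm_le_mul_add_sq hμ hC hδ hCδ hg k (by positivity)
      (by rwa [← mul_assoc, ← pow_succ])
      (norm_apply_le_of_norm_le_mul_add_sq hμ hC hδ hCδ hg ht hμt hz)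

theorem norm_iterate_le_two_mul_of_norm_le_mul_add_sq (hμ : 1 ≤ μ) (hC : 0 ≤ C) (hδ : 0 ≤ δ)
    (hCδ : 4 * C * δ ≤ μ ^ 2 - μ) (hg : ∀ z, ‖z‖ ≤ 2 * δ → ‖g z‖ ≤ μ * ‖z‖ + C * ‖z‖ ^ 2)
    {k m : ℕ} (hkm : k ≤ m) {z : E} (hz : ‖z‖ ≤ δ / μ ^ m) : ‖g^[k] z‖ ≤ 2 * δ := by
  have hμm : 0 < μ ^ m := by positivity
  set t := (μ ^ m)⁻¹
  have ht : 0 ≤ t := by positivity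
  have hkt : μ ^ k * t ≤ 1 := by
    rw [← div_eq_mul_inv, div_le_one hμm]
    exact pow_le_pow_right₀ hμ hkm
  have hz' : ‖z‖ ≤ δ * t * (1 + t) := by
    rw [div_eq_mul_inv] at hz
    nlinarith [mul_nonneg hδ ht]
  have := norm_iterate_le_of_norm_le_mul_add_sq hμ hC hδ hCδ hg k ht hkt hz'
  nlinarith [mul_nonneg hδ (mul_nonneg (pow_nonneg (zero_le_one.trans hμ) k) ht)]

end QuadraticGrowth

section MeanValue

variable {𝕜 : Type*} [RCLike 𝕜] {g : 𝕜 → 𝕜} {lam : 𝕜} {C ρ : ℝ}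

theorem norm_sub_mul_le_of_norm_deriv_sub_le (hg : Differentiable 𝕜 g) (hg0 : g 0 = 0)
    (hC : 0 ≤ C) (hderiv : ∀ z, ‖z‖ ≤ ρ → ‖deriv g z - lam‖ ≤ C * ‖z‖) {z : 𝕜} (hz : ‖z‖ ≤ ρ) :
    ‖g z - lam * z‖ ≤ C * ‖z‖ ^ 2 := by
  have hderiv' (x : 𝕜) : HasDerivAt (fun x => g x - lam * x) (deriv g x - lam) x := by
    simpa using (hg x).hasDerivAt.fun_sub ((hasDerivAt_id' x).const_mul lam)
  have hbound : ∀ x ∈ closedBall (0 : 𝕜) ‖z‖, ‖deriv (fun x => g x - lam * x) x‖ ≤ C * ‖z‖ := by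
    intro x hx
    rw [mem_closedBall_zero_iff] at hx
    rw [(hderiv' x).deriv]
    exact (hderiv x (hx.trans hz)).trans (by gcongr)
  have := (convex_closedBall (0 : 𝕜) ‖z‖).norm_image_sub_le_of_norm_deriv_le
    (fun x _ => (hderiv' x).differentiableAt) hbound (mem_closedBall_self (norm_nonneg z))
    (mem_closedBall_zero_iff.2 le_rfl)
  simpa [hg0, sq, mul_assoc] using this

theorem dist_apply_le_of_norm_deriv_sub_le (hg : Differentiable 𝕜 g) (hC : 0 ≤ C)
    (hderiv : ∀ z, ‖z‖ ≤ ρ → ‖deriv g z - lam‖ ≤ C * ‖z‖) :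
    ∀ x ∈ closedBall (0 : 𝕜) ρ, ∀ y ∈ closedBall (0 : 𝕜) ρ,
      dist (g x) (g y) ≤ (‖lam‖ + C * ρ) * dist x y := by
  have hbound : ∀ z ∈ closedBall (0 : 𝕜) ρ, ‖deriv g z‖ ≤ ‖lam‖ + C * ρ := by
    intro z hz
    rw [mem_closedBall_zero_iff] at hz
    calc ‖deriv g z‖ ≤ ‖lam‖ + ‖deriv g z - lam‖ := norm_le_insert' _ _
      _ ≤ ‖lam‖ + C * ρ := by gcongr; exact (hderiv z hz).trans (by gcongr)
  intro x hx y hy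
  simpa only [dist_eq_norm] using
    (convex_closedBall (0 : 𝕜) ρ).norm_image_sub_le_of_norm_deriv_le (fun z _ => hg z) hbound hy hx

end MeanValue

section Poincare

variable {𝕜 : Type*} [RCLike 𝕜] {g : 𝕜 → 𝕜} {lam : 𝕜}

def poincareApprox (g : 𝕜 → 𝕜) (lam : 𝕜) (n : ℕ) (w : 𝕜) : 𝕜 := g^[n] (w / lam ^ n)

noncomputable def poincareFunction (g : 𝕜 → 𝕜) (lam : 𝕜) (w : 𝕜) : 𝕜 :=
  limUnder atTop (poincareApprox g lam · w)

theorem poincareApprox_succ (n : ℕ) (w : 𝕜) :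
    poincareApprox g lam (n + 1) w = g (poincareApprox g lam n (w / lam)) := by
  rw [poincareApprox, poincareApprox, iterate_succ_apply', div_div, pow_succ']

theorem continuous_poincareApprox (hg : Continuous g) (n : ℕ) :
    Continuous (poincareApprox g lam n) :=
  (hg.iterate n).comp (continuous_id.div_const _)

theorem differentiable_poincareApprox (hg : Differentiable 𝕜 g) (n : ℕ) :
    Differentiable 𝕜 (poincareApprox g lam n) :=
  (hg.iterate n).comp (differentiable_id.div_const _)

theorem dist_poincareApprox_succ_le (hg : Differentiable 𝕜 g) (hg0 : g 0 = 0)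
    (hlam : 1 < ‖lam‖) {C δ : ℝ} (hC : 0 ≤ C) (hδ : 0 ≤ δ) (hCδ : 4 * C * δ ≤ ‖lam‖ ^ 2 - ‖lam‖)
    (hderiv : ∀ z, ‖z‖ ≤ 2 * δ → ‖deriv g z - lam‖ ≤ C * ‖z‖) {w : 𝕜} (hw : ‖w‖ ≤ δ) (n : ℕ) :
    dist (poincareApprox g lam n w) (poincareApprox g lam (n + 1) w) ≤
      C * δ ^ 2 * ((‖lam‖ + C * (2 * δ)) / ‖lam‖ ^ 2) ^ n := by
  set μ := ‖lam‖
  have hlam0 : lam ≠ 0 := norm_pos_iff.1 (one_pos.trans hlam)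
  have hquad : ∀ z, ‖z‖ ≤ 2 * δ → ‖g z‖ ≤ μ * ‖z‖ + C * ‖z‖ ^ 2 := fun z hz =>
    calc ‖g z‖ ≤ ‖lam * z‖ + ‖g z - lam * z‖ := norm_le_insert' _ _
      _ ≤ μ * ‖z‖ + C * ‖z‖ ^ 2 := by
        rw [norm_mul]; gcongr; exact norm_sub_mul_le_of_norm_deriv_sub_le hg hg0 hC hderiv hz
  have horbit {k m : ℕ} (hkm : k ≤ m) : g^[k] (w / lam ^ m) ∈ closedBall 0 (2 * δ) := by
    refine mem_closedBall_zero_iff.2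
      (norm_iterate_le_two_mul_of_norm_le_mul_add_sq hlam.le hC hδ hCδ hquad hkm ?_)
    rw [norm_div, norm_pow]
    gcongr
  set u := w / lam ^ (n + 1)
  have hlu : lam * u = w / lam ^ n := by
    rw [show u = w / lam ^ (n + 1) from rfl, pow_succ]
    field_simp
  have hu : poincareApprox g lam n w = g^[n] (lam * u) := by rw [hlu, poincareApprox]
  have hu' : poincareApprox g lam (n + 1) w = g^[n] (g u) := iterate_succ_apply _ _ _
  have hu_norm : ‖u‖ ≤ δ / μ ^ n := by
    rw [norm_div, norm_pow]
    gcongr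
    exacts [hlam.le, n.le_succ]
  rw [hu, hu']
  calc dist (g^[n] (lam * u)) (g^[n] (g u))
      ≤ (μ + C * (2 * δ)) ^ n * dist (lam * u) (g u) :=
        dist_iterate_le_pow_mul (by positivity) (dist_apply_le_of_norm_deriv_sub_le hg hC hderiv)
          (fun k hk => by rw [hlu]; exact horbit hk.le)
          (fun k hk => by rw [← iterate_succ_apply]; exact horbit (Nat.succ_le_succ hk.le))
    _ ≤ (μ + C * (2 * δ)) ^ n * (C * (δ / μ ^ n) ^ 2) := by
        gcongr
        rw [dist_comm, dist_eq_norm]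
        refine (norm_sub_mul_le_of_norm_deriv_sub_le hg hg0 hC hderiv ?_).trans (by gcongr)
        refine hu_norm.trans ((div_le_self hδ (one_le_pow₀ hlam.le)).trans ?_)
        linarith
    _ = C * δ ^ 2 * ((μ + C * (2 * δ)) / μ ^ 2) ^ n := by
        rw [div_pow, div_pow, ← pow_mul, mul_comm n 2, pow_mul]
        ring

theorem tendstoUniformlyOn_poincareApprox_closedBall (hg : Differentiable 𝕜 g) (hg0 : g 0 = 0)
    (hg' : deriv g 0 = lam) (hg'' : DifferentiableAt 𝕜 (deriv g) 0) (hlam : 1 < ‖lam‖) :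
    ∃ δ > 0, TendstoUniformlyOn (poincareApprox g lam) (poincareFunction g lam) atTop
      (closedBall 0 δ) := by
  set μ := ‖lam‖
  obtain ⟨C, hC, hCbound⟩ : ∃ C > 0, ∀ᶠ z in 𝓝 0, ‖deriv g z - lam‖ ≤ C * ‖z‖ := by
    obtain ⟨C, hC, h⟩ := hg''.hasDerivAt.isBigO_sub.exists_pos
    exact ⟨C, hC, by simpa [hg'] using h.bound⟩
  obtain ⟨ρ, hρ, hρC⟩ := Metric.nhds_basis_closedBall.eventually_iff.1 hCbound
  have hμ : 0 < μ ^ 2 - μ := by nlinarith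
  set δ := min (ρ / 2) ((μ ^ 2 - μ) / (4 * C))
  have hδ : 0 < δ := lt_min (by positivity) (by positivity)
  have hCδ : 4 * C * δ ≤ μ ^ 2 - μ := by
    rw [← le_div_iff₀' (by positivity)]
    exact min_le_right _ _
  have h2δ : 2 * δ ≤ ρ := by linarith [min_le_left (ρ / 2) ((μ ^ 2 - μ) / (4 * C))]
  have hderiv : ∀ z, ‖z‖ ≤ 2 * δ → ‖deriv g z - lam‖ ≤ C * ‖z‖ := fun z hz =>
    hρC (mem_closedBall_zero_iff.2 (hz.trans h2δ))
  have hratio : (μ + C * (2 * δ)) / μ ^ 2 < 1 := by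
    rw [div_lt_one (by positivity)]
    nlinarith
  exact ⟨δ, hδ, tendstoUniformlyOn_limUnder_of_dist_le_geometric (by positivity) hratio
    fun w hw n => dist_poincareApprox_succ_le hg hg0 hlam hC.le hδ.le hCδ hderiv
      (mem_closedBall_zero_iff.1 hw) n⟩

theorem poincareFunction_mul (hg : Continuous g) (hlam : lam ≠ 0) {w : 𝕜}
    (hw : Tendsto (poincareApprox g lam · w) atTop (𝓝 (poincareFunction g lam w))) :
    g (poincareFunction g lam w) = poincareFunction g lam (lam * w) := by
  refine (((tendsto_add_atTop_iff_nat 1).1 ?_).limUnder_eq).symm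
  simpa only [poincareApprox_succ, mul_div_cancel_left₀ w hlam, comp_def] using
    (hg.tendsto _).comp hw

theorem TendstoLocallyUniformlyOn.poincareApprox_ball_mul (hg : Continuous g) (hlam : lam ≠ 0)
    {r : ℝ}
    (h : TendstoLocallyUniformlyOn (poincareApprox g lam) (poincareFunction g lam) atTop
      (ball 0 r)) :
    TendstoLocallyUniformlyOn (poincareApprox g lam) (poincareFunction g lam) atTop
      (ball 0 (r * ‖lam‖)) := by
  have hmaps : MapsTo (· / lam) (ball 0 (r * ‖lam‖)) (ball (0 : 𝕜) r) := fun w hw => by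
    rw [mem_ball_zero_iff] at hw ⊢
    rwa [norm_div, div_lt_iff₀ (norm_pos_iff.2 hlam)]
  have hcont : ContinuousOn (· / lam) (ball (0 : 𝕜) (r * ‖lam‖)) :=
    (continuous_id.div_const lam).continuousOn
  have hψ : ContinuousOn (poincareFunction g lam) (ball 0 r) :=
    h.continuousOn (.of_forall fun n => (continuous_poincareApprox hg n).continuousOn)
  have hsucc := (hg.comp_tendstoLocallyUniformlyOn (h.comp _ hmaps hcont) (hψ.comp hcont hmaps))
  have heq : EqOn (g ∘ poincareFunction g lam ∘ (· / lam)) (poincareFunction g lam)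
      (ball 0 (r * ‖lam‖)) := fun w hw => by
    simpa only [comp_apply, mul_div_cancel₀ w hlam] using
      poincareFunction_mul hg hlam (h.tendsto_at (hmaps hw))
  exact .of_add_nat 1 ((hsucc.congr_right heq).congr fun n w _ => (poincareApprox_succ n w).symm)

theorem tendstoLocallyUniformly_poincareApprox (hg : Continuous g) (hlam : 1 < ‖lam‖) {δ : ℝ}
    (hδ : 0 < δ)
    (h : TendstoUniformlyOn (poincareApprox g lam) (poincareFunction g lam) atTop
      (closedBall 0 δ)) :
    TendstoLocallyUniformly (poincareApprox g lam) (poincareFunction g lam) atTop := by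
  have hlam0 : lam ≠ 0 := norm_pos_iff.1 (one_pos.trans hlam)
  have hball (N : ℕ) : TendstoLocallyUniformlyOn (poincareApprox g lam) (poincareFunction g lam)
      atTop (ball 0 (δ * ‖lam‖ ^ N)) := by
    induction N with
    | zero => simpa using (h.mono ball_subset_closedBall).tendstoLocallyUniformlyOn
    | succ N ih => simpa only [pow_succ, mul_assoc] using ih.poincareApprox_ball_mul hg hlam0
  have hcover : ⋃ N : ℕ, ball (0 : 𝕜) (δ * ‖lam‖ ^ N) = univ := by
    refine eq_univ_of_forall fun w => mem_iUnion.2 ?_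
    obtain ⟨N, hN⟩ := pow_unbounded_of_one_lt (‖w‖ / δ) hlam
    exact ⟨N, by rwa [mem_ball_zero_iff, ← div_lt_iff₀' hδ]⟩
  rw [← tendstoLocallyUniformlyOn_univ, ← hcover]
  exact tendstoLocallyUniformlyOn_iUnion (fun _ => isOpen_ball) hball

theorem poincareFunction_zero (hg0 : g 0 = 0) : poincareFunction g lam 0 = 0 := by
  simp only [poincareFunction, poincareApprox, zero_div, iterate_fixed hg0]
  exact tendsto_const_nhds.limUnder_eq

theorem hasDerivAt_poincareApprox_zero (hg : HasDerivAt g lam 0) (hg0 : g 0 = 0)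
    (hlam : lam ≠ 0) (n : ℕ) :
    HasDerivAt (poincareApprox g lam n) 1 0 := by
  have hiter : HasDerivAt g^[n] (lam ^ n) (0 / lam ^ n) := by
    rw [zero_div]
    exact HasDerivAt.iterate 0 hg hg0 n
  have hdiv : HasDerivAt (· / lam ^ n) (lam ^ n)⁻¹ (0 : 𝕜) := by
    simpa using (hasDerivAt_id (0 : 𝕜)).div_const (lam ^ n)
  have := hiter.comp 0 hdiv
  rwa [mul_inv_cancel₀ (pow_ne_zero n hlam)] at this

end Poincare

theorem stmt5 (g : ℂ → ℂ) (hg : Differentiable ℂ g) (lam : ℂ)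
    (hg0 : g 0 = 0) (hg' : deriv g 0 = lam) (hlam : 1 < ‖lam‖) :
    ∃ ψ : ℂ → ℂ, Differentiable ℂ ψ ∧
      TendstoLocallyUniformly (fun (n : ℕ) (w : ℂ) => g^[n] (w / lam ^ n)) ψ atTop ∧
      (∀ w : ℂ, g (ψ w) = ψ (lam * w)) ∧ ψ 0 = 0 ∧ deriv ψ 0 = 1 := by
  have hlam0 : lam ≠ 0 := norm_pos_iff.1 (one_pos.trans hlam)
  obtain ⟨δ, hδ, hloc⟩ := tendstoUniformlyOn_poincareApprox_closedBall hg hg0 hg'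
    (hg.analyticAt 0).deriv.differentiableAt hlam
  have hlim := tendstoLocallyUniformly_poincareApprox hg.continuous hlam hδ hloc
  have hlim' := tendstoLocallyUniformlyOn_univ.2 hlim
  have hdiff : ∀ᶠ n in atTop, DifferentiableOn ℂ (poincareApprox g lam n) univ :=
    .of_forall fun n => (differentiable_poincareApprox hg n).differentiableOn
  have hderiv := (hlim'.deriv hdiff isOpen_univ).tendsto_at (mem_univ 0)
  have hderiv_approx (n : ℕ) : deriv (poincareApprox g lam n) 0 = 1 :=
    (hasDerivAt_poincareApprox_zero (hg' ▸ (hg 0).hasDerivAt) hg0 hlam0 n).deriv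
  refine ⟨poincareFunction g lam,
    differentiableOn_univ.1 (hlim'.differentiableOn hdiff isOpen_univ), hlim, fun w => poincareFunction_mul hg.continuous hlam0 (hlim'.tendsto_at (mem_univ w)),
    poincareFunction_zero hg0, tendsto_nhds_unique hderiv ?_⟩
  simpa only [comp_apply, hderiv_approx] using tendsto_const_nhds
end

section
/- Let A and B be closed subsets of ℂ, and suppose there exist r > 0 and q ∈ ℂ with |q| > 1 such that the Hausdorff distance between [q^n A]_r and [q^n B]_r tends to 0 as n → ∞ (n ∈ ℕ). Then A and B are asymptotically similar about 0 in the window of radius r: the Hausdorff distance between [jA]_r and [jB]_r tends to 0 as j → ∞ in ℂ (that is, along the filter |j| → ∞ of complex scaling factors). -/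
open Complex Metric Filter Function

/-
Every `j` with `‖j‖ ≥ ‖q‖ ^ N` factors as `j = u * q ^ n` with `n ≥ N` and `1 ≤ ‖u‖ < ‖q‖`.
Multiplication by `u` maps `[q ^ n A]_{r / ‖u‖}` onto `[j A]_r` and multiplies Hausdorff
distances by `‖u‖`, while shrinking the radius of two windows does not increase their distance: a
point of the smaller window is matched either inside the smaller ball or, by radial projection, on
the smaller sphere. Hence `d_H([j A]_r, [j B]_r) ≤ ‖q‖ * d_H([q ^ n A]_r, [q ^ n B]_r)`.
-/

open scoped Pointwise

section Scaling
variable {𝕜 E : Type*} [NormedDivisionRing 𝕜] [SeminormedAddCommGroup E] [Module 𝕜 E]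
  [NormSMulClass 𝕜 E]

theorem hausdorffEDist_smul₀_le {c : 𝕜} (hc : c ≠ 0) (s t : Set E) :
    hausdorffEDist (c • s) (c • t) ≤ ‖c‖₊ • hausdorffEDist s t := by
  refine hausdorffEDist_le_of_infEDist ?_ ?_ <;> rintro _ ⟨x, hx, rfl⟩ <;>
    rw [infEDist_smul₀ hc] <;> gcongr
  · exact infEDist_le_hausdorffEDist_of_mem hx
  · rw [hausdorffEDist_comm]; exact infEDist_le_hausdorffEDist_of_mem hx

theorem hausdorffEDist_smul₀ {c : 𝕜} (hc : c ≠ 0) (s t : Set E) :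
    hausdorffEDist (c • s) (c • t) = ‖c‖₊ • hausdorffEDist s t := by
  refine le_antisymm (hausdorffEDist_smul₀_le hc s t) ?_
  have := hausdorffEDist_smul₀_le (inv_ne_zero hc) (c • s) (c • t)
  rwa [inv_smul_smul₀ hc, inv_smul_smul₀ hc, nnnorm_inv,
    le_inv_smul_iff_of_pos (nnnorm_pos.2 hc)] at this

theorem hausdorffDist_smul₀ {c : 𝕜} (hc : c ≠ 0) (s t : Set E) :
    hausdorffDist (c • s) (c • t) = ‖c‖ * hausdorffDist s t := by
  simp_rw [hausdorffDist, hausdorffEDist_smul₀ hc, ENNReal.toReal_smul, NNReal.smul_def,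
    coe_nnnorm, smul_eq_mul]

end Scaling

theorem exists_norm_eq_dist_le {E : Type*} [NormedAddCommGroup E] [NormedSpace ℝ E]
    [Nontrivial E] {x y : E} {s : ℝ} (hx : ‖x‖ ≤ s) (hy : s ≤ ‖y‖) :
    ∃ z : E, ‖z‖ = s ∧ dist x z ≤ dist x y := by
  rcases eq_or_ne x 0 with rfl | hx0
  · obtain ⟨z, hz⟩ := exists_norm_eq E ((norm_nonneg _).trans hx)
    exact ⟨z, hz, by simpa [hz] using hy⟩
  · have hxpos : 0 < ‖x‖ := norm_pos_iff.2 hx0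
    refine ⟨(s / ‖x‖) • x, ?_, ?_⟩
    · rw [norm_smul, Real.norm_eq_abs, abs_div, abs_norm, abs_of_nonneg (hxpos.le.trans hx),
        div_mul_cancel₀ _ hxpos.ne']
    · have hdist : dist x ((s / ‖x‖) • x) = s - ‖x‖ := by
        have hsub : (s / ‖x‖) • x - x = (s / ‖x‖ - 1) • x := by rw [sub_smul, one_smul]
        rw [dist_comm, dist_eq_norm, hsub, norm_smul, Real.norm_eq_abs,
          abs_of_nonneg (sub_nonneg.2 ((one_le_div hxpos).2 hx)), sub_mul,
          div_mul_cancel₀ _ hxpos.ne', one_mul]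
      rw [hdist, dist_comm, dist_eq_norm]
      linarith [norm_sub_norm_le y x]

theorem exists_eq_mul_pow_of_pow_le_norm {𝕜 : Type*} [NormedDivisionRing 𝕜] {q j : 𝕜}
    (hq : 1 < ‖q‖) {N : ℕ} (hj : ‖q‖ ^ N ≤ ‖j‖) :
    ∃ n ≥ N, ∃ u : 𝕜, j = u * q ^ n ∧ 1 ≤ ‖u‖ ∧ ‖u‖ < ‖q‖ := by
  obtain ⟨n, hn, hn'⟩ := exists_nat_pow_near ((one_le_pow₀ hq.le).trans hj) hq
  have hq0 : q ≠ 0 := norm_pos_iff.1 (one_pos.trans hq)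
  have hqn : 0 < ‖q‖ ^ n := pow_pos (one_pos.trans hq) n
  refine ⟨n, ?_, j * (q ^ n)⁻¹, (inv_mul_cancel_right₀ (pow_ne_zero n hq0) j).symm, ?_, ?_⟩
  · exact Nat.lt_succ_iff.1 ((pow_lt_pow_iff_right₀ hq).1 (hj.trans_lt hn'))
  · rwa [norm_mul, norm_inv, norm_pow, ← div_eq_mul_inv, one_le_div hqn]
  · rwa [norm_mul, norm_inv, norm_pow, ← div_eq_mul_inv, div_lt_iff₀ hqn, ← pow_succ']

theorem window_subset_closedBall (A : Set ℂ) (r : ℝ) : window A r ⊆ closedBall 0 r :=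
  Set.union_subset Set.inter_subset_right sphere_subset_closedBall

theorem window_nonempty (A : Set ℂ) {r : ℝ} (hr : 0 ≤ r) : (window A r).Nonempty :=
  (NormedSpace.sphere_nonempty.2 hr).mono Set.subset_union_right

theorem hausdorffEDist_window_ne_top (A B : Set ℂ) {r : ℝ} (hr : 0 ≤ r) :
    hausdorffEDist (window A r) (window B r) ≠ ⊤ :=
  hausdorffEDist_ne_top_of_nonempty_of_bounded (window_nonempty A hr) (window_nonempty B hr)
    (isBounded_closedBall.subset (window_subset_closedBall A r))
    (isBounded_closedBall.subset (window_subset_closedBall B r))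

theorem window_smul {u : ℂ} (hu : u ≠ 0) (A : Set ℂ) (r : ℝ) :
    window (u • A) r = u • window A (r / ‖u‖) := by
  simp only [window, Set.smul_set_union, Set.smul_set_inter₀ hu, smul_closedBall' hu,
    smul_sphere' hu, smul_zero, mul_div_cancel₀ r (norm_ne_zero_iff.2 hu)]

theorem infEDist_window_le_of_norm_le {s r : ℝ} (hsr : s ≤ r) (B : Set ℂ) {x : ℂ}
    (hx : ‖x‖ ≤ s) : infEDist x (window B s) ≤ infEDist x (window B r) := by
  refine le_infEDist.2 fun y hy => ?_
  by_cases hyB : y ∈ B ∧ ‖y‖ ≤ s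
  · exact infEDist_le_edist_of_mem (Or.inl ⟨hyB.1, mem_closedBall_zero_iff.2 hyB.2⟩)
  · have hsy : s ≤ ‖y‖ := by
      rcases hy with ⟨hyB', -⟩ | hy
      · exact (not_le.1 fun h => hyB ⟨hyB', h⟩).le
      · rw [mem_sphere_zero_iff_norm.1 hy]; exact hsr
    obtain ⟨z, hz, hxz⟩ := exists_norm_eq_dist_le hx hsy
    calc infEDist x (window B s) ≤ edist x z :=
          infEDist_le_edist_of_mem (Or.inr (mem_sphere_zero_iff_norm.2 hz))
      _ ≤ edist x y := by rw [edist_dist, edist_dist]; exact ENNReal.ofReal_le_ofReal hxz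

theorem infEDist_window_le_hausdorffEDist {s r : ℝ} (hsr : s ≤ r) (A B : Set ℂ) {x : ℂ}
    (hx : x ∈ window A s) :
    infEDist x (window B s) ≤ hausdorffEDist (window A r) (window B r) := by
  rcases hx with ⟨hxA, hxs⟩ | hxs
  · rw [mem_closedBall_zero_iff] at hxs
    calc infEDist x (window B s) ≤ infEDist x (window B r) :=
          infEDist_window_le_of_norm_le hsr B hxs
      _ ≤ _ := infEDist_le_hausdorffEDist_of_mem
          (Or.inl ⟨hxA, mem_closedBall_zero_iff.2 (hxs.trans hsr)⟩)
  · have hxB : x ∈ window B s := Or.inr hxs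
    simp [infEDist_zero_of_mem hxB]

theorem hausdorffEDist_window_mono {s r : ℝ} (hsr : s ≤ r) (A B : Set ℂ) :
    hausdorffEDist (window A s) (window B s) ≤ hausdorffEDist (window A r) (window B r) :=
  hausdorffEDist_le_of_infEDist (fun _ hx => infEDist_window_le_hausdorffEDist hsr A B hx)
    fun _ hx => hausdorffEDist_comm (s := window B r) ▸
      infEDist_window_le_hausdorffEDist hsr B A hx

theorem hausdorffDist_window_mono {s r : ℝ} (hsr : s ≤ r) (hr : 0 ≤ r) (A B : Set ℂ) :
    hausdorffDist (window A s) (window B s) ≤ hausdorffDist (window A r) (window B r) :=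
  ENNReal.toReal_mono (hausdorffEDist_window_ne_top A B hr) (hausdorffEDist_window_mono hsr A B)

theorem hausdorffDist_window_smul_le {u : ℂ} (hu : 1 ≤ ‖u‖) {r : ℝ} (hr : 0 ≤ r)
    (A B : Set ℂ) :
    hausdorffDist (window (u • A) r) (window (u • B) r) ≤
      ‖u‖ * hausdorffDist (window A r) (window B r) := by
  have hu0 : u ≠ 0 := norm_pos_iff.1 (one_pos.trans_le hu)
  rw [window_smul hu0, window_smul hu0, hausdorffDist_smul₀ hu0]
  exact mul_le_mul_of_nonneg_left (hausdorffDist_window_mono (div_le_self hr hu) hr A B)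
    (norm_nonneg u)

theorem stmt7_general (A B : Set ℂ)
    (r : ℝ) (hr : 0 < r) (q : ℂ) (hq : 1 < ‖q‖)
    (h : Tendsto (fun n : ℕ =>
        Metric.hausdorffDist (window ((fun z => q ^ n * z) '' A) r)
          (window ((fun z => q ^ n * z) '' B) r)) atTop (nhds 0)) :
    Tendsto (fun j : ℂ =>
        Metric.hausdorffDist (window ((fun z => j * z) '' A) r)
          (window ((fun z => j * z) '' B) r)) (Bornology.cobounded ℂ) (nhds 0) := by
  have hq0 : 0 < ‖q‖ := one_pos.trans hq
  simp only [← smul_eq_mul, Set.image_smul] at h ⊢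
  rw [Metric.tendsto_nhds] at h ⊢
  intro ε hε
  obtain ⟨N, hN⟩ := eventually_atTop.1 (h (ε / ‖q‖) (div_pos hε hq0))
  filter_upwards [tendsto_norm_cobounded_atTop.eventually_ge_atTop (‖q‖ ^ N)] with j hj
  obtain ⟨n, hn, u, rfl, hu1, huq⟩ := exists_eq_mul_pow_of_pow_le_norm hq hj
  have hqn := hN n hn
  rw [Real.dist_0_eq_abs, abs_of_nonneg hausdorffDist_nonneg] at hqn ⊢
  rw [mul_smul, mul_smul]
  calc _ ≤ ‖u‖ * hausdorffDist (window (q ^ n • A) r) (window (q ^ n • B) r) :=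
        hausdorffDist_window_smul_le hu1 hr.le _ _
    _ < ‖q‖ * (ε / ‖q‖) := mul_lt_mul'' huq hqn (norm_nonneg u) hausdorffDist_nonneg
    _ = ε := mul_div_cancel₀ ε hq0.ne'

theorem stmt7 (A B : Set ℂ) (hA : IsClosed A) (hB : IsClosed B)
    (r : ℝ) (hr : 0 < r) (q : ℂ) (hq : 1 < ‖q‖)
    (h : Tendsto (fun n : ℕ =>
        Metric.hausdorffDist (window ((fun z => q ^ n * z) '' A) r)
          (window ((fun z => q ^ n * z) '' B) r)) atTop (nhds 0)) :
    Tendsto (fun j : ℂ =>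
        Metric.hausdorffDist (window ((fun z => j * z) '' A) r)
          (window ((fun z => j * z) '' B) r)) (Bornology.cobounded ℂ) (nhds 0) :=
  stmt7_general A B r hr q hq h
end

section
/- Let F = F_{a,v} be a Misiurewicz cubic map with data (ℓ, m, a_0): the marked critical point a is periodic under F, the free critical point −a is not periodic, a_0 = F^{∘ℓ}(2a) with ℓ ≥ 1, F^{∘m}(a_0) = a_0, and |(F^{∘m})′(a_0)| > 1. Then (F^{∘ℓ})′(2a) ≠ 0; equivalently, the forward orbit 2a, F(2a), …, F^{∘(ℓ−1)}(2a) avoids both critical points a and −a of F. -/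
/-!
Since `F(2a) = F(-a)`, a hit of `-a` by the orbit of `2a` at time `j ≥ 1` would make `-a` periodic
(at time `0` it forces `a = 0 = -a`, again periodic).
A hit of `a` would put `a0` in the forward orbit of the periodic point `a`, hence `a` in the cycle
of `a0`; the chain rule then makes the multiplier of that cycle vanish, contradicting repulsion.
-/

open Complex Metric Filter Function

open Finset

section Iterate

variable {𝕜 : Type*} [NontriviallyNormedField 𝕜] {f : 𝕜 → 𝕜}

theorem deriv_iterate (hf : Differentiable 𝕜 f) (n : ℕ) (x : 𝕜) :
    deriv (f^[n]) x = ∏ i ∈ range n, deriv f (f^[i] x) := by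
  induction n with
  | zero => simp
  | succ n ih =>
    rw [iterate_succ', prod_range_succ,
      deriv_comp x hf.differentiableAt (hf.iterate n).differentiableAt, ih, mul_comm]

theorem deriv_iterate_eq_zero_of_iterate_eq_critical (hf : Differentiable 𝕜 f) {m n : ℕ}
    {x c : 𝕜} (hx : IsPeriodicPt f m x) (hm : 0 < m) (hc : f^[n] x = c) (hcrit : deriv f c = 0) :
    deriv (f^[m]) x = 0 := by
  rw [deriv_iterate hf]
  exact prod_eq_zero (mem_range.mpr (Nat.mod_lt n hm)) (by rw [hx.iterate_mod_apply, hc, hcrit])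

end Iterate

theorem Function.IsPeriodicPt.exists_iterate_eq_of_iterate {α : Type*} {f : α → α} {p : ℕ}
    {x : α} (hx : IsPeriodicPt f p x) (hp : 0 < p) (k : ℕ) : ∃ n, f^[n] (f^[k] x) = x :=
  ⟨p * k - k, by
    rw [← iterate_add_apply, Nat.sub_add_cancel (Nat.le_mul_of_pos_left k hp)]
    exact (hx.mul_const k).eq⟩

namespace Fav

theorem hasDerivAt (a v z : ℂ) : HasDerivAt (Fav a v) (3 * (z - a) * (z + a)) z := by
  have h := ((hasDerivAt_pow 3 z).sub ((hasDerivAt_id z).const_mul (3 * a ^ 2))).add_const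
    (2 * a ^ 3 + v)
  exact h.congr_deriv (by push_cast; ring)

theorem differentiable (a v : ℂ) : Differentiable ℂ (Fav a v) :=
  fun z => (hasDerivAt a v z).differentiableAt

theorem deriv_eq_zero_iff (a v z : ℂ) : deriv (Fav a v) z = 0 ↔ z = a ∨ z = -a := by
  rw [(hasDerivAt a v z).deriv, mul_eq_zero, mul_eq_zero, sub_eq_zero, add_eq_zero_iff_eq_neg]
  norm_num

theorem iterate_succ_two_mul (a v : ℂ) (j : ℕ) :
    (Fav a v)^[j + 1] (2 * a) = (Fav a v)^[j + 1] (-a) := by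
  rw [iterate_succ_apply, iterate_succ_apply, show Fav a v (2 * a) = Fav a v (-a) by
    simp only [Fav]; ring]

end Fav

namespace IsMisiurewicz

variable {a v a0 : ℂ} {l m : ℕ}

theorem ne_zero (hmis : IsMisiurewicz a v l m a0) : a ≠ 0 := by
  rintro rfl
  obtain ⟨p, hp, hpa⟩ := hmis.marked_periodic
  exact hmis.free_not_periodic p hp (by simpa using hpa)

theorem iterate_two_mul_ne_marked (hmis : IsMisiurewicz a v l m a0) {j : ℕ} (hj : j < l) :
    (Fav a v)^[j] (2 * a) ≠ a := by
  intro hja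
  obtain ⟨p, hp, hpa⟩ := hmis.marked_periodic
  have ha_to_a0 : (Fav a v)^[l - j] a = a0 := by
    have h := hmis.ha0
    rwa [← Nat.sub_add_cancel hj.le, iterate_add_apply, hja] at h
  obtain ⟨n, hn⟩ := ha_to_a0 ▸ IsPeriodicPt.exists_iterate_eq_of_iterate hpa hp (l - j)
  have hmult := deriv_iterate_eq_zero_of_iterate_eq_critical (Fav.differentiable a v) hmis.hper
    hmis.hm hn ((Fav.deriv_eq_zero_iff a v a).mpr (.inl rfl))
  exact absurd hmis.hrep (by norm_num [hmult])

theorem iterate_two_mul_ne_free (hmis : IsMisiurewicz a v l m a0) (j : ℕ) :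
    (Fav a v)^[j] (2 * a) ≠ -a := by
  intro hja
  cases j with
  | zero => exact hmis.ne_zero (by simp only [iterate_zero, id] at hja; linear_combination hja / 3)
  | succ j => exact hmis.free_not_periodic (j + 1) j.succ_pos (Fav.iterate_succ_two_mul a v j ▸ hja)

end IsMisiurewicz

theorem stmt14 (a v : ℂ) (l m : ℕ) (a0 : ℂ) (hmis : IsMisiurewicz a v l m a0) :
    deriv ((Fav a v)^[l]) (2 * a) ≠ 0 ∧
    ∀ j : ℕ, j < l → (Fav a v)^[j] (2 * a) ≠ a ∧ (Fav a v)^[j] (2 * a) ≠ -a := by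
  have hcrit : ∀ j, j < l → (Fav a v)^[j] (2 * a) ≠ a ∧ (Fav a v)^[j] (2 * a) ≠ -a :=
    fun j hj => ⟨hmis.iterate_two_mul_ne_marked hj, hmis.iterate_two_mul_ne_free j⟩
  refine ⟨?_, hcrit⟩
  rw [deriv_iterate (Fav.differentiable a v)]
  refine prod_ne_zero_iff.mpr fun j hj => ?_
  rw [Ne, Fav.deriv_eq_zero_iff, not_or]
  exact hcrit j (mem_range.mp hj)
end
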